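/- Let G and H be simple graphs on n vertices with real adjacency matrices A and B and walk matrices W_G and W_H. If G and H are generalized cospectral (characteristic polynomials of A + sJ and B + sJ coincide for all real s), then W_Gᵀ W_G = W_Hᵀ W_H. -/

import Mathlib

open Matrix Polynomial

/-- The walk matrix of a graph with adjacency matrix `A` on `n` vertices. -/
noncomputable def walkMatrix {n : ℕ} (A : Matrix (Fin n) (Fin n) ℝ) :
    Matrix (Fin n) (Fin n) ℝ :=
  Matrix.of fun i j => ((A ^ (j : ℕ)) *ᵥ (1 : Fin n → ℝ)) i

/-- The all-ones matrix `J`. -/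
def allOnes (n : ℕ) : Matrix (Fin n) (Fin n) ℝ := Matrix.of fun _ _ => 1

/- ### Auxiliary lemmas -/

lemma my_charpoly_conj {n : ℕ} (P Q M : Matrix (Fin n) (Fin n) ℝ) (h : P * Q = 1) :
    (P * M * Q).charpoly = M.charpoly := by
  have hmap : P.map (C : ℝ →+* ℝ[X]) * Q.map C = 1 := by
    rw [← Matrix.map_mul, h, Matrix.map_one _ (map_zero C) (map_one C)]
  have hdiag : (Matrix.scalar (Fin n) (X : ℝ[X]))
      = (X : ℝ[X]) • (1 : Matrix (Fin n) (Fin n) ℝ[X]) := by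
    ext i j
    by_cases hij : i = j <;>
      simp [Matrix.scalar_apply, Matrix.one_apply, Matrix.diagonal, hij]
  have hch : charmatrix (P * M * Q) = P.map C * charmatrix M * Q.map C := by
    rw [charmatrix, charmatrix, mul_sub, sub_mul]
    congr 1
    · rw [hdiag, mul_smul_comm, mul_one, smul_mul_assoc, hmap]
    · simp [Matrix.map_mul]
  rw [Matrix.charpoly, Matrix.charpoly, hch, det_mul, det_mul, mul_right_comm, ← det_mul, hmap,
    det_one, one_mul]

lemma my_conj_pow {n : ℕ} (P Q D : Matrix (Fin n) (Fin n) ℝ) (h1 : P * Q = 1) (h2 : Q * P = 1) :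
    ∀ m : ℕ, (P * D * Q) ^ m = P * D ^ m * Q := by
  intro m
  induction m with
  | zero => rw [pow_zero, pow_zero, mul_one, h1]
  | succ k ih =>
      have key : ∀ x : Matrix (Fin n) (Fin n) ℝ, Q * (P * x) = x := by
        intro x; rw [← mul_assoc, h2, one_mul]
      rw [pow_succ, ih, pow_succ]
      simp only [mul_assoc, key]

lemma my_trace_pow_eigen {n : ℕ} (M : Matrix (Fin n) (Fin n) ℝ) (hM : M.IsHermitian) (m : ℕ) :
    (M ^ m).trace = ∑ i, (hM.eigenvalues i) ^ m := by
  have h1 : (hM.eigenvectorUnitary : Matrix (Fin n) (Fin n) ℝ)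
      * star (hM.eigenvectorUnitary : Matrix (Fin n) (Fin n) ℝ) = 1 :=
    (Matrix.mem_unitaryGroup_iff).mp hM.eigenvectorUnitary.2
  have h2 : star (hM.eigenvectorUnitary : Matrix (Fin n) (Fin n) ℝ)
      * (hM.eigenvectorUnitary : Matrix (Fin n) (Fin n) ℝ) = 1 :=
    (Matrix.mem_unitaryGroup_iff').mp hM.eigenvectorUnitary.2
  have hspec := hM.spectral_theorem
  have hd : (RCLike.ofReal ∘ hM.eigenvalues : Fin n → ℝ) = hM.eigenvalues := by
    funext i; simp
  rw [hd] at hspec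
  have h3 := congrArg (fun N : Matrix (Fin n) (Fin n) ℝ => (N ^ m).trace) hspec
  simp only [Unitary.conjStarAlgAut_apply] at h3
  rw [h3, my_conj_pow _ (star _) _ h1 h2, Matrix.trace_mul_cycle, h2, one_mul,
    Matrix.diagonal_pow, Matrix.trace_diagonal]
  simp [Pi.pow_apply]

lemma my_charpoly_diagonal {n : ℕ} (d : Fin n → ℝ) :
    (Matrix.diagonal d).charpoly = ∏ i, (X - C (d i)) := by
  have : charmatrix (Matrix.diagonal d) = Matrix.diagonal fun i => (X : ℝ[X]) - C (d i) := by
    ext i j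
    by_cases hij : i = j
    · subst hij; simp [charmatrix_apply_eq]
    · simp [charmatrix_apply_ne _ _ _ hij, Matrix.diagonal_apply_ne _ hij]
  rw [Matrix.charpoly, this, det_diagonal]

lemma my_charpoly_eigen {n : ℕ} (M : Matrix (Fin n) (Fin n) ℝ) (hM : M.IsHermitian) :
    M.charpoly = ∏ i, (X - C (hM.eigenvalues i)) := by
  have h1 : (hM.eigenvectorUnitary : Matrix (Fin n) (Fin n) ℝ)
      * star (hM.eigenvectorUnitary : Matrix (Fin n) (Fin n) ℝ) = 1 :=
    (Matrix.mem_unitaryGroup_iff).mp hM.eigenvectorUnitary.2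
  have hspec := hM.spectral_theorem
  have hd : (RCLike.ofReal ∘ hM.eigenvalues : Fin n → ℝ) = hM.eigenvalues := by
    funext i; simp
  rw [hd] at hspec
  have h3 := congrArg Matrix.charpoly hspec
  rw [h3, Unitary.conjStarAlgAut_apply, my_charpoly_conj _ _ _ h1, my_charpoly_diagonal]

lemma my_trace_pow_eq {n : ℕ} (M N : Matrix (Fin n) (Fin n) ℝ) (hM : M.IsHermitian)
    (hN : N.IsHermitian) (h : M.charpoly = N.charpoly) (m : ℕ) :
    (M ^ m).trace = (N ^ m).trace := by
  have hprod : ((Finset.univ.val.map hM.eigenvalues).map fun a => X - C a).prod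
      = ((Finset.univ.val.map hN.eigenvalues).map fun a => X - C a).prod := by
    rw [Multiset.map_map, Multiset.map_map, ← Finset.prod_eq_multiset_prod,
      ← Finset.prod_eq_multiset_prod]
    exact (my_charpoly_eigen M hM).symm.trans (h.trans (my_charpoly_eigen N hN))
  have hms : Finset.univ.val.map hM.eigenvalues = Finset.univ.val.map hN.eigenvalues := by
    have := congrArg Polynomial.roots hprod
    rwa [roots_multiset_prod_X_sub_C, roots_multiset_prod_X_sub_C] at this
  rw [my_trace_pow_eigen M hM m, my_trace_pow_eigen N hN m]
  have : ((Finset.univ.val.map hM.eigenvalues).map fun a => a ^ m).sum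
      = ((Finset.univ.val.map hN.eigenvalues).map fun a => a ^ m).sum := by rw [hms]
  rwa [Multiset.map_map, Multiset.map_map, ← Finset.sum_eq_multiset_sum,
    ← Finset.sum_eq_multiset_sum] at this

/-- The matrix `A + Y J` over `ℝ[Y]`, entrywise. -/
noncomputable def pmat {n : ℕ} (M : Matrix (Fin n) (Fin n) ℝ) : Matrix (Fin n) (Fin n) ℝ[X] :=
  Matrix.of fun i j => C (M i j) + X

/-- Entrywise coefficient extraction. -/
def cmap {n : ℕ} (k : ℕ) (P : Matrix (Fin n) (Fin n) ℝ[X]) : Matrix (Fin n) (Fin n) ℝ :=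
  Matrix.of fun i j => (P i j).coeff k

lemma coeff_one_mul (p q : ℝ[X]) :
    (p * q).coeff 1 = p.coeff 0 * q.coeff 1 + p.coeff 1 * q.coeff 0 := by
  rw [coeff_mul, show (Finset.HasAntidiagonal.antidiagonal 1 : Finset (ℕ × ℕ)) = {(0,1),(1,0)} from rfl]
  simp [add_comm]

lemma cmap0_mul {n : ℕ} (P Q : Matrix (Fin n) (Fin n) ℝ[X]) :
    cmap 0 (P * Q) = cmap 0 P * cmap 0 Q := by
  ext i j
  simp [cmap, Matrix.mul_apply, finset_sum_coeff, mul_coeff_zero]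

lemma cmap1_mul {n : ℕ} (P Q : Matrix (Fin n) (Fin n) ℝ[X]) :
    cmap 1 (P * Q) = cmap 0 P * cmap 1 Q + cmap 1 P * cmap 0 Q := by
  ext i j
  simp [cmap, Matrix.mul_apply, finset_sum_coeff, coeff_one_mul, Finset.sum_add_distrib]

lemma cmap0_pmat {n : ℕ} (M : Matrix (Fin n) (Fin n) ℝ) : cmap 0 (pmat M) = M := by
  ext i j; simp [cmap, pmat]

lemma cmap1_pmat {n : ℕ} (M : Matrix (Fin n) (Fin n) ℝ) : cmap 1 (pmat M) = allOnes n := by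
  ext i j; simp [cmap, pmat, allOnes, coeff_one]

lemma cmap0_pow {n : ℕ} (M : Matrix (Fin n) (Fin n) ℝ) (m : ℕ) :
    cmap 0 ((pmat M) ^ m) = M ^ m := by
  induction m with
  | zero =>
      ext i j
      simp [cmap, Matrix.one_apply, apply_ite (fun p : ℝ[X] => p.coeff 0)]
  | succ k ih => rw [pow_succ, cmap0_mul, ih, cmap0_pmat, pow_succ]

lemma cmap1_pow {n : ℕ} (M : Matrix (Fin n) (Fin n) ℝ) (m : ℕ) :
    cmap 1 ((pmat M) ^ m) = ∑ a ∈ Finset.range m, M ^ a * allOnes n * M ^ (m - 1 - a) := by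
  induction m with
  | zero =>
      ext i j
      simp [cmap, Matrix.one_apply, apply_ite (fun p : ℝ[X] => p.coeff 1), coeff_one]
  | succ k ih =>
      rw [pow_succ', cmap1_mul, ih, cmap0_pmat, cmap1_pmat, cmap0_pow]
      rw [Finset.sum_range_succ']
      simp only [pow_zero, one_mul, Nat.sub_zero, Finset.mul_sum]
      congr 1
      · apply Finset.sum_congr rfl
        intro a ha
        rw [← mul_assoc, ← mul_assoc, ← pow_succ']
        congr 2
        omega

lemma trace_cmap1_pow {n : ℕ} (M : Matrix (Fin n) (Fin n) ℝ) (m : ℕ) :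
    (cmap 1 ((pmat M) ^ (m + 1))).trace = (m + 1 : ℝ) * (M ^ m * allOnes n).trace := by
  rw [cmap1_pow, Matrix.trace_sum]
  have : ∀ a ∈ Finset.range (m + 1),
      (M ^ a * allOnes n * M ^ (m + 1 - 1 - a)).trace = (M ^ m * allOnes n).trace := by
    intro a ha
    simp only [Finset.mem_range] at ha
    have hx : m + 1 - 1 - a + a = m := by omega
    rw [Matrix.trace_mul_cycle, ← pow_add, hx]
  rw [Finset.sum_congr rfl this, Finset.sum_const, Finset.card_range, nsmul_eq_mul]
  push_cast
  ring

lemma coeff_one_trace {n : ℕ} (P : Matrix (Fin n) (Fin n) ℝ[X]) :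
    P.trace.coeff 1 = (cmap 1 P).trace := by
  simp [Matrix.trace, Matrix.diag, cmap, finset_sum_coeff]

lemma eval_pmat_pow_trace {n : ℕ} (M : Matrix (Fin n) (Fin n) ℝ) (s : ℝ) (m : ℕ) :
    Polynomial.eval s (((pmat M) ^ m).trace) = ((M + s • allOnes n) ^ m).trace := by
  have hmap : (Polynomial.evalRingHom s).mapMatrix ((pmat M) ^ m)
      = (M + s • allOnes n) ^ m := by
    rw [map_pow]
    congr 1
    ext i j
    simp [pmat, allOnes]
  have h : Polynomial.eval s (((pmat M) ^ m).trace)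
      = ((Polynomial.evalRingHom s).mapMatrix ((pmat M) ^ m)).trace := by
    simp [Matrix.trace, Matrix.diag, eval_finset_sum]
  rw [h, hmap]

lemma key_trace {n : ℕ} (A B : Matrix (Fin n) (Fin n) ℝ) (hA : Aᵀ = A) (hB : Bᵀ = B)
    (hgc : ∀ s : ℝ, (A + s • allOnes n).charpoly = (B + s • allOnes n).charpoly) (k : ℕ) :
    (A ^ k * allOnes n).trace = (B ^ k * allOnes n).trace := by
  have hJ : (allOnes n)ᵀ = allOnes n := by
    ext i j; simp [allOnes]
  have herm : ∀ M : Matrix (Fin n) (Fin n) ℝ, Mᵀ = M → ∀ s : ℝ,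
      (M + s • allOnes n).IsHermitian := by
    intro M hM s
    rw [Matrix.IsHermitian, Matrix.conjTranspose_eq_transpose_of_trivial, Matrix.transpose_add,
      Matrix.transpose_smul, hM, hJ]
  have htr : ∀ m : ℕ, ((pmat A) ^ m).trace = ((pmat B) ^ m).trace := by
    intro m
    apply Polynomial.funext
    intro s
    rw [eval_pmat_pow_trace, eval_pmat_pow_trace]
    exact my_trace_pow_eq _ _ (herm A hA s) (herm B hB s) (hgc s) m
  have h1 := congrArg (fun p : ℝ[X] => p.coeff 1) (htr (k + 1))
  simp only [coeff_one_trace] at h1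
  rw [trace_cmap1_pow, trace_cmap1_pow] at h1
  have hne : ((k : ℝ) + 1) ≠ 0 := by positivity
  exact mul_left_cancel₀ hne h1

lemma trace_mul_allOnes {n : ℕ} (P : Matrix (Fin n) (Fin n) ℝ) :
    (P * allOnes n).trace = (P *ᵥ (1 : Fin n → ℝ)) ⬝ᵥ (1 : Fin n → ℝ) := by
  simp [Matrix.trace, Matrix.diag, Matrix.mul_apply, allOnes, dotProduct, mulVec]

lemma gram_entry {n : ℕ} (M : Matrix (Fin n) (Fin n) ℝ) (hsym : Mᵀ = M) (a b : ℕ) :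
    (M ^ a *ᵥ (1 : Fin n → ℝ)) ⬝ᵥ (M ^ b *ᵥ (1 : Fin n → ℝ))
      = (M ^ (a + b) * allOnes n).trace := by
  have hsb : (M ^ b)ᵀ = M ^ b := by rw [Matrix.transpose_pow, hsym]
  rw [Matrix.dotProduct_mulVec, show (M ^ a *ᵥ (1 : Fin n → ℝ)) ᵥ* M ^ b
      = M ^ b *ᵥ (M ^ a *ᵥ (1 : Fin n → ℝ)) by rw [← hsb, Matrix.vecMul_transpose, hsb],
    Matrix.mulVec_mulVec, ← pow_add, add_comm b a, trace_mul_allOnes]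

/-- Generalized cospectral graphs have equal walk-matrix Gram matrices. -/
theorem generalizedCospectral_walkMatrix_gram_eq {n : ℕ}
    (G H : SimpleGraph (Fin n)) [DecidableRel G.Adj] [DecidableRel H.Adj]
    (hgc : ∀ s : ℝ, (G.adjMatrix ℝ + s • allOnes n).charpoly =
        (H.adjMatrix ℝ + s • allOnes n).charpoly) :
    (walkMatrix (G.adjMatrix ℝ))ᵀ * walkMatrix (G.adjMatrix ℝ) =
      (walkMatrix (H.adjMatrix ℝ))ᵀ * walkMatrix (H.adjMatrix ℝ) := by
  have hAs : (G.adjMatrix ℝ)ᵀ = G.adjMatrix ℝ := G.transpose_adjMatrix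
  have hBs : (H.adjMatrix ℝ)ᵀ = H.adjMatrix ℝ := H.transpose_adjMatrix
  have key := key_trace (G.adjMatrix ℝ) (H.adjMatrix ℝ) hAs hBs hgc
  ext i j
  have e1 : ∀ (M : Matrix (Fin n) (Fin n) ℝ),
      ((walkMatrix M)ᵀ * walkMatrix M) i j
        = (M ^ (i : ℕ) *ᵥ (1 : Fin n → ℝ)) ⬝ᵥ (M ^ (j : ℕ) *ᵥ (1 : Fin n → ℝ)) := by
    intro M
    simp [walkMatrix, Matrix.mul_apply, dotProduct, Matrix.transpose_apply]
  rw [e1, e1, gram_entry _ hAs, gram_entry _ hBs, key]
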